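/- Let B be a real p×q matrix with p ≥ q ≥ 1 and n ≥ 1. Suppose y ∈ ℝ^q and x ∈ ℝ^p are not both zero and λ ∈ ℝ with λ ≠ n − 1 is such that D · w = λ · w, where w is the vector indexed by Fin q ⊕ (Fin n × Fin p) with w(inl j) = y j and w(inr (k,i)) = x i for all k. Then n − 1 − λ is an eigenvalue of D, i.e., there is a nonzero vector u with D · u = (n − 1 − λ) · u. -/

import Mathlib

/-!
On block-constant vectors `(s, t, …, t)` the matrix `D` acts as
`(s, t) ↦ (n Bᵀ t, B s + (n - 1) t)`. If `(y, x)` is such an eigenvector for `λ`, then with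
`μ = n - 1 - λ ≠ 0` the vector `((λ / μ) y, x)` is one for `μ`, and it is nonzero when `x ≠ 0`.
When `x = 0`, the equation `λ y = 0` forces `λ = 0` and `B y = 0`; then `rank B < q ≤ p`, so
`Bᵀ t = 0` for some `t ≠ 0`, and `(0, t, …, t)` is an eigenvector for `n - 1`.
-/

open Matrix

/-- The matrix `C` of Construction III: indexed by `Fin p ⊕ (Fin n × Fin q)`,
first block row `[0, B, …, B]`, and the `n×n` grid of `q×q` blocks has zero diagonal blocks
and identity blocks `I_q` off the diagonal. -/
def matC3 (p q n : ℕ) (B : Matrix (Fin p) (Fin q) ℝ) :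
    Matrix (Fin p ⊕ Fin n × Fin q) (Fin p ⊕ Fin n × Fin q) ℝ :=
  Matrix.of fun a b =>
    match a, b with
    | Sum.inl i, Sum.inr (_, j) => B i j
    | Sum.inr (_, j), Sum.inl i => B i j
    | Sum.inr (k, j), Sum.inr (k', j') => if k ≠ k' ∧ j = j' then 1 else 0
    | _, _ => 0

/-- The matrix `D` of Construction III: indexed by `Fin q ⊕ (Fin n × Fin p)`,
first block row `[0, Bᵀ, …, Bᵀ]`, and the `n×n` grid of `p×p` blocks has zero diagonal blocks
and identity blocks `I_p` off the diagonal. -/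
def matD3 (p q n : ℕ) (B : Matrix (Fin p) (Fin q) ℝ) :
    Matrix (Fin q ⊕ Fin n × Fin p) (Fin q ⊕ Fin n × Fin p) ℝ :=
  Matrix.of fun a b =>
    match a, b with
    | Sum.inl j, Sum.inr (_, i) => B i j
    | Sum.inr (_, i), Sum.inl j => B i j
    | Sum.inr (k, i), Sum.inr (k', i') => if k ≠ k' ∧ i = i' then 1 else 0
    | _, _ => 0

theorem Matrix.rank_lt_card_width_iff {K m n : Type*} [Field K] [Fintype m] [Fintype n]
    (A : Matrix m n K) : A.rank < Fintype.card n ↔ ∃ v ≠ 0, A *ᵥ v = 0 := by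
  have hrn := LinearMap.finrank_range_add_finrank_ker A.mulVecLin
  rw [Module.finrank_fintype_fun_eq_card] at hrn
  have : A.rank < Fintype.card n ↔ 1 ≤ Module.finrank K (LinearMap.ker A.mulVecLin) := by
    rw [Matrix.rank]; omega
  rw [this, Submodule.one_le_finrank_iff, Submodule.ne_bot_iff]
  simp only [LinearMap.mem_ker, Matrix.mulVecLin_apply]
  exact ⟨fun ⟨v, hv, h0⟩ => ⟨v, h0, hv⟩, fun ⟨v, h0, hv⟩ => ⟨v, hv, h0⟩⟩

theorem Matrix.exists_mulVec_transpose_eq_zero {K m n : Type*} [Field K] [Fintype m]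
    [Fintype n] {A : Matrix m n K} (hcard : Fintype.card n ≤ Fintype.card m) {v : n → K}
    (hv : v ≠ 0) (hAv : A *ᵥ v = 0) : ∃ w ≠ 0, Aᵀ *ᵥ w = 0 := by
  have hA : A.rank < Fintype.card n := A.rank_lt_card_width_iff.2 ⟨v, hv, hAv⟩
  exact Aᵀ.rank_lt_card_width_iff.1 (by rw [rank_transpose]; omega)

section matD3

variable {p q n : ℕ}

theorem sumElim_snd_ne_zero (hn : 1 ≤ n) (s : Fin q → ℝ) {t : Fin p → ℝ} (ht : t ≠ 0) :
    Sum.elim s (fun ki : Fin n × Fin p => t ki.2) ≠ 0 :=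
  fun h => ht (funext fun i => congrFun h (.inr (⟨0, hn⟩, i)))

theorem matD3_mulVec_sumElim (B : Matrix (Fin p) (Fin q) ℝ) (s : Fin q → ℝ) (t : Fin p → ℝ) :
    matD3 p q n B *ᵥ Sum.elim s (fun ki => t ki.2) =
      Sum.elim ((n : ℝ) • (Bᵀ *ᵥ t)) (fun ki => (B *ᵥ s + ((n : ℝ) - 1) • t) ki.2) := by
  funext a
  rcases a with j | ⟨k, i⟩
  · simp [matD3, mulVec, dotProduct, Fintype.sum_sum_type, Fintype.sum_prod_type,
      Finset.mul_sum]
  · simp only [matD3, mulVec, dotProduct, Fintype.sum_sum_type, Fintype.sum_prod_type, of_apply,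
      Sum.elim_inl, Sum.elim_inr, Pi.add_apply, Pi.smul_apply, smul_eq_mul, ite_mul, one_mul,
      zero_mul, add_right_inj]
    -- row `(k, i)` of the grid picks up `t i` once from each of the `n - 1` blocks `k' ≠ k`
    simp [ite_and, Finset.sum_ite_irrel, Finset.sum_ite, Finset.filter_ne,
      Finset.card_erase_of_mem, Nat.cast_pred k.pos]

theorem matD3_mulVec_sumElim_eq_smul_iff (hn : 1 ≤ n) (B : Matrix (Fin p) (Fin q) ℝ)
    (s : Fin q → ℝ) (t : Fin p → ℝ) (μ : ℝ) :
    matD3 p q n B *ᵥ Sum.elim s (fun ki => t ki.2) = μ • Sum.elim s (fun ki => t ki.2) ↔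
      (n : ℝ) • (Bᵀ *ᵥ t) = μ • s ∧ B *ᵥ s + ((n : ℝ) - 1) • t = μ • t := by
  have : Nonempty (Fin n) := ⟨⟨0, hn⟩⟩
  have hsmul : μ • Sum.elim s (fun ki : Fin n × Fin p => t ki.2) =
      Sum.elim (μ • s) (fun ki => (μ • t) ki.2) := by
    funext a
    cases a <;> rfl
  rw [matD3_mulVec_sumElim, hsmul, Sum.elim_eq_iff]
  exact and_congr_right' (Prod.snd_surjective (α := Fin n)).injective_comp_right.eq_iff

theorem matD3_exists_eigenvector_of_mulVec_eq_zero (hn : 1 ≤ n) (hpq : q ≤ p)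
    {B : Matrix (Fin p) (Fin q) ℝ} {y : Fin q → ℝ}
    (hy : y ≠ 0) (hBy : B *ᵥ y = 0) :
    ∃ u ≠ 0, matD3 p q n B *ᵥ u = ((n : ℝ) - 1) • u := by
  obtain ⟨t, ht, hBt⟩ := exists_mulVec_transpose_eq_zero (by simpa using hpq) hy hBy
  refine ⟨Sum.elim 0 (fun ki => t ki.2), sumElim_snd_ne_zero hn 0 ht, ?_⟩
  rw [matD3_mulVec_sumElim_eq_smul_iff hn]
  simp [hBt]

theorem matD3_mulVec_reflected_eigenvector (hn : 1 ≤ n) {B : Matrix (Fin p) (Fin q) ℝ}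
    {x : Fin p → ℝ} {y : Fin q → ℝ} {l : ℝ}
    (hl : l ≠ (n : ℝ) - 1) (hx : (n : ℝ) • (Bᵀ *ᵥ x) = l • y)
    (hy : B *ᵥ y + ((n : ℝ) - 1) • x = l • x) :
    matD3 p q n B *ᵥ Sum.elim ((l / ((n : ℝ) - 1 - l)) • y) (fun ki => x ki.2) =
      ((n : ℝ) - 1 - l) • Sum.elim ((l / ((n : ℝ) - 1 - l)) • y) (fun ki => x ki.2) := by
  have hμ : (n : ℝ) - 1 - l ≠ 0 := sub_ne_zero.2 hl.symm
  have hBy : B *ᵥ y = (l - ((n : ℝ) - 1)) • x := by rw [sub_smul, ← hy, add_sub_cancel_right]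
  rw [matD3_mulVec_sumElim_eq_smul_iff hn, mulVec_smul, hBy, smul_smul, smul_smul,
    mul_div_cancel₀ _ hμ, ← add_smul]
  refine ⟨hx, congrArg (· • x) ?_⟩
  field_simp
  ring

end matD3

theorem matD3_eigenvalue_reflection_general (p q n : ℕ) (hpq : q ≤ p) (hn : 1 ≤ n)
    (B : Matrix (Fin p) (Fin q) ℝ) (x : Fin p → ℝ) (y : Fin q → ℝ) (l : ℝ)
    (hl : l ≠ (n : ℝ) - 1)
    (hxy : ¬(x = 0 ∧ y = 0))
    (hev : matD3 p q n B *ᵥ Sum.elim y (fun ki => x ki.2) =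
      l • Sum.elim y (fun ki => x ki.2)) :
    ∃ u : Fin q ⊕ Fin n × Fin p → ℝ, u ≠ 0 ∧
      matD3 p q n B *ᵥ u = ((n : ℝ) - 1 - l) • u := by
  obtain ⟨hBx, hBy⟩ := (matD3_mulVec_sumElim_eq_smul_iff hn B y x l).1 hev
  by_cases hx : x = 0
  · subst hx
    have hy : y ≠ 0 := fun hy => hxy ⟨rfl, hy⟩
    have hl0 : l = 0 := by simpa [hy] using hBx.symm
    subst hl0
    simpa using matD3_exists_eigenvector_of_mulVec_eq_zero hn hpq hy (by simpa using hBy)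
  · exact ⟨_, sumElim_snd_ne_zero hn _ hx, matD3_mulVec_reflected_eigenvector hn hl hBx hBy⟩

/-- If `(y, x, …, x)` (not zero) is an eigenvector of `D` with eigenvalue `λ ≠ n − 1`, then
`n − 1 − λ` is also an eigenvalue of `D`. -/
theorem matD3_eigenvalue_reflection (p q n : ℕ) (hq : 1 ≤ q) (hpq : q ≤ p) (hn : 1 ≤ n)
    (B : Matrix (Fin p) (Fin q) ℝ) (x : Fin p → ℝ) (y : Fin q → ℝ) (l : ℝ)
    (hl : l ≠ (n : ℝ) - 1)
    (hxy : ¬(x = 0 ∧ y = 0))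
    (hev : matD3 p q n B *ᵥ Sum.elim y (fun ki => x ki.2) =
      l • Sum.elim y (fun ki => x ki.2)) :
    ∃ u : Fin q ⊕ Fin n × Fin p → ℝ, u ≠ 0 ∧
      matD3 p q n B *ᵥ u = ((n : ℝ) - 1 - l) • u :=
  matD3_eigenvalue_reflection_general p q n hpq hn B x y l hl hxy hev
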